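/- For r in [π/2, r_M], the supremum over t ≥ 0 of G(r,t) = ∫₀ᵗ g(F(r,s)) ds equals ln(r_M sin r_M / (r sin r)), attained at the unique time T_r with F(r,T_r) = r_M (interpreted as 0 when r = π/2). -/

import Mathlib

open Real

/-- `f(r) = −(r cos r sin r)/(r + cos r sin r)`. -/
noncomputable def fOT (r : ℝ) : ℝ :=
  -(r * Real.cos r * Real.sin r) / (r + Real.cos r * Real.sin r)

/-- `g(r) = −cos r (r cos r + sin r)/(r + cos r sin r)`, extended continuously by
`g(0) = −1`. -/
noncomputable def gOT (r : ℝ) : ℝ :=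
  if r = 0 then -1
  else -(Real.cos r * (r * Real.cos r + Real.sin r)) / (r + Real.cos r * Real.sin r)

/-!
On `(π/2, π)` the vector field `f` is positive and vanishes at both ends, so a flow line
starting inside that interval increases forever inside it and, `f` being bounded below on
`[r, r_M]`, passes through `r_M` exactly once. Along the flow `g = f · (log (x sin x))'`, so
`G(r, t) = log (F(r,t) sin F(r,t)) - log (r sin r)`, and `x sin x` is maximal on `[π/2, π]`
at the critical point `r_M`.
-/

open Set Filter

section Autonomous

variable {E : Type*} [NormedAddCommGroup E] [NormedSpace ℝ E]

theorem ODE_solution_eq_of_apply_eq_zero {v : E → E} {y : ℝ → E} {c : E} {t₀ : ℝ}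
    (hv : ContDiffAt ℝ 1 v c) (hvc : v c = 0) (hy : ∀ t, HasDerivAt y (v (y t)) t)
    (ht₀ : y t₀ = c) (t : ℝ) : y t = c := by
  obtain ⟨K, s, hs, hK⟩ := hv.exists_lipschitzOnWith
  have hy_cont : Continuous y := Differentiable.continuous fun t => (hy t).differentiableAt
  have hopen : IsOpen {t | y t = c} := isOpen_iff_mem_nhds.2 fun t₁ (ht₁ : y t₁ = c) =>
    ODE_solution_unique_of_eventually (v := fun _ => v) (s := fun _ => s) (g := fun _ => c)
      (Eventually.of_forall fun _ => hK)
      ((hy_cont.continuousAt.eventually_mem (ht₁ ▸ hs)).mono fun t ht => ⟨hy t, ht⟩)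
      (Eventually.of_forall fun t => ⟨hvc ▸ hasDerivAt_const t c, mem_of_mem_nhds hs⟩) ht₁
  have hclopen : IsClopen {t | y t = c} := ⟨isClosed_eq hy_cont continuous_const, hopen⟩
  exact eq_univ_iff_forall.1 (hclopen.eq_univ ⟨t₀, ht₀⟩) t

end Autonomous

section ScalarAutonomous

variable {v y : ℝ → ℝ}

theorem ODE_solution_mem_Ioo {a b : ℝ} (ha : ContDiffAt ℝ 1 v a) (hb : ContDiffAt ℝ 1 v b)
    (hva : v a = 0) (hvb : v b = 0) (hy : ∀ t, HasDerivAt y (v (y t)) t)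
    (h₀ : y 0 ∈ Ioo a b) (t : ℝ) : y t ∈ Ioo a b := by
  have hrange : OrdConnected (range y) :=
    (isPreconnected_range (Differentiable.continuous fun t => (hy t).differentiableAt)).ordConnected
  by_contra hout
  rcases not_and_or.1 hout with hle | hge
  · obtain ⟨s, hs⟩ := hrange.out (mem_range_self t) (mem_range_self 0) ⟨not_lt.1 hle, h₀.1.le⟩
    exact h₀.1.ne' (ODE_solution_eq_of_apply_eq_zero ha hva hy hs 0)
  · obtain ⟨s, hs⟩ := hrange.out (mem_range_self 0) (mem_range_self t) ⟨h₀.2.le, not_lt.1 hge⟩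
    exact h₀.2.ne (ODE_solution_eq_of_apply_eq_zero hb hvb hy hs 0)

theorem ODE_solution_exists_le_of_pos {a b : ℝ} (hv : ContinuousOn v (Icc a b))
    (hpos : ∀ x ∈ Icc a b, 0 < v x) (hy : ∀ t, HasDerivAt y (v (y t)) t) (hmono : Monotone y)
    (ha : a ≤ y 0) : ∃ t, 0 ≤ t ∧ b ≤ y t := by
  by_contra! hlt
  obtain ⟨x₀, hx₀, hmin⟩ :=
    isCompact_Icc.exists_isMinOn (nonempty_Icc.2 (ha.trans (hlt 0 le_rfl).le)) hv
  have hc := hpos x₀ hx₀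
  -- while `y` stays in `[a, b]` it moves at speed at least `min v = v x₀`
  have hspeed := (convex_Ici (0 : ℝ)).mul_sub_le_image_sub_of_le_deriv (f := y) (C := v x₀)
    (fun t _ => (hy t).continuousAt.continuousWithinAt)
    (fun t _ => (hy t).differentiableAt.differentiableWithinAt)
    (fun t ht => by
      rw [interior_Ici] at ht
      rw [(hy t).deriv]
      exact hmin ⟨ha.trans (hmono ht.le), (hlt t ht.le).le⟩)
  have hT : 0 ≤ (b - a) / v x₀ := div_nonneg (by linarith [hlt 0 le_rfl]) hc.le
  have := hspeed 0 self_mem_Ici _ hT hT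
  rw [sub_zero, mul_div_cancel₀ _ hc.ne'] at this
  linarith [hlt _ hT]

end ScalarAutonomous

theorem one_lt_pi_div_two : 1 < π / 2 := by linarith [pi_gt_three]

theorem add_cos_mul_sin_pos {x : ℝ} (hx : 1 < x) : 0 < x + cos x * sin x := by
  nlinarith [sin_sq_add_cos_sq x, sq_nonneg (sin x + cos x)]

theorem mul_sin_pos {x : ℝ} (hx : x ∈ Ioo 0 π) : 0 < x * sin x :=
  mul_pos hx.1 (sin_pos_of_mem_Ioo hx)

theorem contDiffAt_fOT {x : ℝ} (hx : 1 < x) : ContDiffAt ℝ 1 fOT x :=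
  ((contDiffAt_id.mul contDiff_cos.contDiffAt).mul contDiff_sin.contDiffAt).neg.div
    (contDiffAt_id.add (contDiff_cos.contDiffAt.mul contDiff_sin.contDiffAt))
    (add_cos_mul_sin_pos hx).ne'

theorem fOT_pi_div_two : fOT (π / 2) = 0 := by simp [fOT]

theorem fOT_pi : fOT π = 0 := by simp [fOT]

theorem gOT_pi_div_two : gOT (π / 2) = 0 := by simp [gOT, pi_div_two_pos.ne']

theorem fOT_pos {x : ℝ} (hx : x ∈ Ioo (π / 2) π) : 0 < fOT x := by
  have hcos : cos x < 0 := cos_neg_of_pi_div_two_lt_of_lt hx.1 (by linarith [pi_pos, hx.2])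
  have hxsin : 0 < x * sin x := mul_sin_pos ⟨by linarith [pi_pos, hx.1], hx.2⟩
  refine div_pos ?_ (add_cos_mul_sin_pos (one_lt_pi_div_two.trans hx.1))
  nlinarith [mul_pos hxsin (neg_pos.2 hcos)]

theorem continuousOn_gOT : ContinuousOn gOT (Ioi 1) := by
  refine ContinuousOn.congr (f := fun x => -(cos x * (x * cos x + sin x)) / (x + cos x * sin x))
    ?_ fun x (hx : 1 < x) => if_neg (by linarith)
  refine ContinuousOn.div (by fun_prop) (by fun_prop) fun x (hx : 1 < x) => ?_
  exact (add_cos_mul_sin_pos hx).ne'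

theorem gOT_eq_fOT_mul {x : ℝ} (hx : x ∈ Ioo 1 π) :
    gOT x = fOT x * ((x * cos x + sin x) / (x * sin x)) := by
  have hx₀ : 0 < x := by linarith [hx.1]
  have hsin := sin_pos_of_mem_Ioo ⟨hx₀, hx.2⟩
  have hden := add_cos_mul_sin_pos hx.1
  rw [gOT, if_neg hx₀.ne', fOT]
  field_simp

theorem hasDerivAt_mul_sin (x : ℝ) : HasDerivAt (fun x => x * sin x) (x * cos x + sin x) x :=
  ((hasDerivAt_id' x).fun_mul (hasDerivAt_sin x)).congr_deriv (by ring)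

theorem strictAntiOn_mul_cos_add_sin :
    StrictAntiOn (fun x => x * cos x + sin x) (Icc (π / 2) π) := by
  refine strictAntiOn_of_hasDerivWithinAt_neg (convex_Icc _ _) (by fun_prop)
    (f' := fun x => 2 * cos x - x * sin x) (fun x _ => ?_) fun x hx => ?_
  · exact (((hasDerivAt_id' x).fun_mul (hasDerivAt_cos x)).fun_add
      (hasDerivAt_sin x)).hasDerivWithinAt.congr_deriv (by ring)
  · rw [interior_Icc] at hx
    have hcos : cos x < 0 := cos_neg_of_pi_div_two_lt_of_lt hx.1 (by linarith [pi_pos, hx.2])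
    nlinarith [mul_sin_pos ⟨by linarith [pi_pos, hx.1], hx.2⟩]

theorem mul_sin_le_of_root {rM x : ℝ} (hrM : rM ∈ Icc (π / 2) π)
    (hroot : rM * cos rM + sin rM = 0) (hx : x ∈ Icc (π / 2) π) : x * sin x ≤ rM * sin rM := by
  rcases le_total x rM with hle | hge
  · refine monotoneOn_of_hasDerivWithinAt_nonneg (convex_Icc _ rM) (by fun_prop)
      (fun x _ => (hasDerivAt_mul_sin x).hasDerivWithinAt) (fun z hz => ?_)
      ⟨hx.1, hle⟩ ⟨hrM.1, le_rfl⟩ hle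
    rw [interior_Icc] at hz
    exact hroot ▸ (strictAntiOn_mul_cos_add_sin ⟨hz.1.le, hz.2.le.trans hrM.2⟩ hrM hz.2).le
  · refine antitoneOn_of_hasDerivWithinAt_nonpos (convex_Icc rM _) (by fun_prop)
      (fun x _ => (hasDerivAt_mul_sin x).hasDerivWithinAt) (fun z hz => ?_)
      ⟨le_rfl, hrM.2⟩ ⟨hge, hx.2⟩ hge
    rw [interior_Icc] at hz
    exact hroot ▸ (strictAntiOn_mul_cos_add_sin hrM ⟨hrM.1.trans hz.1.le, hz.2.le⟩ hz.1).le

section Flow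

variable {y : ℝ → ℝ} (hy : ∀ t, HasDerivAt y (fOT (y t)) t)
include hy

theorem flow_mem_Ioo (h₀ : y 0 ∈ Ioo (π / 2) π) (t : ℝ) : y t ∈ Ioo (π / 2) π :=
  ODE_solution_mem_Ioo (contDiffAt_fOT one_lt_pi_div_two)
    (contDiffAt_fOT (one_lt_pi_div_two.trans (by linarith [pi_pos]))) fOT_pi_div_two fOT_pi hy h₀ t

theorem hasDerivAt_log_mul_sin_flow {t : ℝ} (ht : y t ∈ Ioo 1 π) :
    HasDerivAt (fun t => log (y t * sin (y t))) (gOT (y t)) t := by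
  have hpos := mul_sin_pos ⟨one_pos.trans ht.1, ht.2⟩
  refine (((hasDerivAt_mul_sin (y t)).comp t (hy t)).log hpos.ne').congr_deriv ?_
  rw [gOT_eq_fOT_mul ht, Function.comp_apply]
  ring

theorem integral_gOT_flow (hmem : ∀ t, y t ∈ Ioo 1 π) (t : ℝ) :
    ∫ s in (0 : ℝ)..t, gOT (y s) = log (y t * sin (y t)) - log (y 0 * sin (y 0)) := by
  have hy_cont : Continuous y := Differentiable.continuous fun t => (hy t).differentiableAt
  refine intervalIntegral.integral_eq_sub_of_hasDerivAt
    (fun s _ => hasDerivAt_log_mul_sin_flow hy (hmem s)) ?_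
  exact (continuousOn_gOT.comp_continuous hy_cont fun s => (hmem s).1).intervalIntegrable 0 t

end Flow

/-- For `r ∈ [π/2, r_M]`, with `y = F(r,·)` the flow of `y' = f(y)` starting at `r` and
`G(r,t) = ∫₀ᵗ g(F(r,s)) ds`, the supremum of `G(r,t)` over `t ≥ 0` equals
`ln(r_M sin r_M / (r sin r))`, attained at the unique time `T_r` with `F(r,T_r) = r_M`
(and the supremum is `0`, attained by the constant flow, when `r = π/2`). -/
theorem stmt12 (rM : ℝ) (hrM : rM ∈ Set.Ioo (π / 2) π)
    (hroot : rM * Real.cos rM + Real.sin rM = 0)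
    (r : ℝ) (hr : r ∈ Set.Icc (π / 2) rM)
    (y : ℝ → ℝ) (hy0 : y 0 = r) (hy : ∀ t : ℝ, HasDerivAt y (fOT (y t)) t) :
    (r = π / 2 →
      IsGreatest ((fun t : ℝ => ∫ s in (0 : ℝ)..t, gOT (y s)) '' Set.Ici 0) 0) ∧
    (π / 2 < r →
      ∃ T : ℝ, 0 ≤ T ∧ y T = rM ∧ (∀ T' : ℝ, y T' = rM → T' = T) ∧
        IsGreatest ((fun t : ℝ => ∫ s in (0 : ℝ)..t, gOT (y s)) '' Set.Ici 0)
          (∫ s in (0 : ℝ)..T, gOT (y s)) ∧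
        (∫ s in (0 : ℝ)..T, gOT (y s)) =
          Real.log (rM * Real.sin rM / (r * Real.sin r))) := by
  refine ⟨fun hr₀ => ?_, fun hr₀ => ?_⟩
  · have hg : ∀ s, gOT (y s) = 0 := fun s => by
      rw [ODE_solution_eq_of_apply_eq_zero (contDiffAt_fOT one_lt_pi_div_two) fOT_pi_div_two hy
        (hy0.trans hr₀) s, gOT_pi_div_two]
    exact ⟨⟨0, self_mem_Ici, by simp⟩, by rintro _ ⟨t, -, rfl⟩; simp [hg]⟩
  have hmem := flow_mem_Ioo hy (hy0 ▸ ⟨hr₀, hr.2.trans_lt hrM.2⟩)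
  have hmem₁ : ∀ t, y t ∈ Ioo 1 π := fun t => ⟨one_lt_pi_div_two.trans (hmem t).1, (hmem t).2⟩
  have hmono : StrictMono y := strictMono_of_hasDerivAt_pos hy fun t => fOT_pos (hmem t)
  have hG := integral_gOT_flow hy hmem₁
  have hpos : ∀ t, 0 < y t * sin (y t) :=
    fun t => mul_sin_pos (Ioo_subset_Ioo_left zero_le_one (hmem₁ t))
  obtain ⟨t₁, ht₁, hrM_le⟩ := ODE_solution_exists_le_of_pos
    (fun x hx => (contDiffAt_fOT (one_lt_pi_div_two.trans (hr₀.trans_le hx.1))).continuousAt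
      |>.continuousWithinAt)
    (fun x hx => fOT_pos ⟨hr₀.trans_le hx.1, hx.2.trans_lt hrM.2⟩) hy hmono.monotone hy0.ge
  obtain ⟨T, hT, hyT⟩ := intermediate_value_Icc ht₁
    (Differentiable.continuous fun t => (hy t).differentiableAt).continuousOn ⟨hy0 ▸ hr.2, hrM_le⟩
  refine ⟨T, hT.1, hyT, fun T' h => hmono.injective (h.trans hyT.symm),
    ⟨⟨T, hT.1, rfl⟩, ?_⟩, ?_⟩
  · rintro _ ⟨t, -, rfl⟩
    dsimp only
    rw [hG, hG, hyT]
    exact sub_le_sub_right (log_le_log (hpos t)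
      (mul_sin_le_of_root (Ioo_subset_Icc_self hrM) hroot (Ioo_subset_Icc_self (hmem t)))) _
  · rw [hG, ← hyT, ← hy0, log_div (hpos T).ne' (hpos 0).ne']
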